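/- arXiv:2103.13963 — 3 statements merged into one kernel-verified Lean document; each statement's English description precedes it below -/
import Mathlib

section
/- For the quintic equation (1 − ζ₄)A + (5/4)A³ − (5/16)A⁵ = 0 in the unknown A > 0, with ζ₄ ∈ ℝ: if 1 < ζ₄ < 9/4 there are exactly two distinct positive solutions; if ζ₄ ≤ 1 or ζ₄ = 9/4 there is exactly one positive solution (equal to √2 when ζ₄ = 9/4); and if ζ₄ > 9/4 there are no positive solutions. -/
private lemma key_lemma (ζ A : ℝ) (hA : 0 < A) :
    ((1 - ζ) * A + 5 / 4 * A ^ 3 - 5 / 16 * A ^ 5 = 0) ↔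
    (A ^ 2 - 2) ^ 2 = (36 - 16 * ζ) / 5 := by
  constructor
  · intro h
    have h2 : A * ((1 - ζ) + 5/4 * A^2 - 5/16 * A^4) = 0 := by linear_combination h
    have h3 : (1 - ζ) + 5/4 * A^2 - 5/16 * A^4 = 0 :=
      (mul_eq_zero.mp h2).resolve_left hA.ne'
    linear_combination (-16/5 : ℝ) * h3
  · intro h
    linear_combination (-5/16 * A) * h

/-- Counting the positive solutions of the slow-flow equilibrium equation
`(1 − ζ₄)A + (5/4)A³ − (5/16)A⁵ = 0` in the 4-node network. -/
theorem stmt_2 (ζ₄ : ℝ) :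
    (1 < ζ₄ → ζ₄ < 9 / 4 →
      {A : ℝ | 0 < A ∧ (1 - ζ₄) * A + 5 / 4 * A ^ 3 - 5 / 16 * A ^ 5 = 0}.ncard = 2) ∧
    (ζ₄ ≤ 1 ∨ ζ₄ = 9 / 4 →
      ∃! A : ℝ, 0 < A ∧ (1 - ζ₄) * A + 5 / 4 * A ^ 3 - 5 / 16 * A ^ 5 = 0) ∧
    (ζ₄ = 9 / 4 →
      {A : ℝ | 0 < A ∧ (1 - ζ₄) * A + 5 / 4 * A ^ 3 - 5 / 16 * A ^ 5 = 0} = {Real.sqrt 2}) ∧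
    (9 / 4 < ζ₄ →
      ¬ ∃ A : ℝ, 0 < A ∧ (1 - ζ₄) * A + 5 / 4 * A ^ 3 - 5 / 16 * A ^ 5 = 0) := by
  set q : ℝ := (36 - 16 * ζ₄) / 5 with hq_def
  set s : ℝ := Real.sqrt q with hs_def
  have hs0 : 0 ≤ s := Real.sqrt_nonneg q
  refine ⟨?_, ?_, ?_, ?_⟩
  · -- two solutions
    intro h1 h2
    have hq_pos : 0 < q := by rw [hq_def]; linarith
    have hs2 : s ^ 2 = q := Real.sq_sqrt hq_pos.le
    have hq_lt : q < 4 := by rw [hq_def]; linarith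
    have hs_pos : 0 < s := Real.sqrt_pos.mpr hq_pos
    have hs_lt2 : s < 2 := by nlinarith
    set a : ℝ := Real.sqrt (2 - s) with ha_def
    set b : ℝ := Real.sqrt (2 + s) with hb_def
    have ha2 : a ^ 2 = 2 - s := Real.sq_sqrt (by linarith)
    have hb2 : b ^ 2 = 2 + s := Real.sq_sqrt (by linarith)
    have hapos : 0 < a := Real.sqrt_pos.mpr (by linarith)
    have hbpos : 0 < b := Real.sqrt_pos.mpr (by linarith)
    have hab : a ≠ b := by
      have : a < b := Real.sqrt_lt_sqrt (by linarith) (by linarith)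
      exact this.ne
    have hset : {A : ℝ | 0 < A ∧ (1 - ζ₄) * A + 5 / 4 * A ^ 3 - 5 / 16 * A ^ 5 = 0}
        = {a, b} := by
      ext A
      simp only [Set.mem_setOf_eq, Set.mem_insert_iff, Set.mem_singleton_iff]
      constructor
      · rintro ⟨hA, heq⟩
        have hk : (A ^ 2 - 2) ^ 2 = q := (key_lemma ζ₄ A hA).mp heq
        have hfac : (A ^ 2 - 2 - s) * (A ^ 2 - 2 + s) = 0 := by
          linear_combination hk - hs2
        rcases mul_eq_zero.mp hfac with h | h
        · right
          rw [hb_def, ← Real.sqrt_sq hA.le]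
          congr 1
          linarith
        · left
          rw [ha_def, ← Real.sqrt_sq hA.le]
          congr 1
          linarith
      · rintro (rfl | rfl)
        · exact ⟨hapos, (key_lemma ζ₄ a hapos).mpr (by rw [ha2]; linear_combination hs2)⟩
        · exact ⟨hbpos, (key_lemma ζ₄ b hbpos).mpr (by rw [hb2]; linear_combination hs2)⟩
    rw [hset, Set.ncard_pair hab]
  · -- unique solution
    intro h
    have hq_nonneg : 0 ≤ q := by
      rcases h with h | h <;> rw [hq_def] <;> [linarith; rw [h]] <;> norm_num
    have hs2 : s ^ 2 = q := Real.sq_sqrt hq_nonneg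
    set b : ℝ := Real.sqrt (2 + s) with hb_def
    have hb2 : b ^ 2 = 2 + s := Real.sq_sqrt (by linarith)
    have hbpos : 0 < b := Real.sqrt_pos.mpr (by linarith)
    refine ⟨b, ⟨hbpos, (key_lemma ζ₄ b hbpos).mpr (by rw [hb2]; linear_combination hs2)⟩, ?_⟩
    rintro B ⟨hB, heq⟩
    have hk : (B ^ 2 - 2) ^ 2 = q := (key_lemma ζ₄ B hB).mp heq
    have hfac : (B ^ 2 - 2 - s) * (B ^ 2 - 2 + s) = 0 := by
      linear_combination hk - hs2
    rcases mul_eq_zero.mp hfac with h' | h'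
    · rw [hb_def, ← Real.sqrt_sq hB.le]
      congr 1
      linarith
    · rcases h with h | h
      · -- ζ₄ ≤ 1: B^2 = 2 - s ≤ 0, contradiction
        exfalso
        have hq4 : 4 ≤ q := by rw [hq_def]; linarith
        have hs_ge2 : 2 ≤ s := by nlinarith
        nlinarith [pow_pos hB 2]
      · -- ζ₄ = 9/4: s = 0, so B = b anyway
        have hq0 : q = 0 := by rw [hq_def, h]; norm_num
        have hs_eq : s = 0 := by nlinarith
        rw [hb_def, ← Real.sqrt_sq hB.le]
        congr 1
        linarith
  · -- critical case: set = {√2}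
    intro h
    subst h
    ext A
    simp only [Set.mem_setOf_eq, Set.mem_singleton_iff]
    constructor
    · rintro ⟨hA, heq⟩
      have hk : (A ^ 2 - 2) ^ 2 = q := (key_lemma _ A hA).mp heq
      have hq0 : q = 0 := by rw [hq_def]; norm_num
      have hA2 : A ^ 2 = 2 := by nlinarith
      rw [← Real.sqrt_sq hA.le, hA2]
    · rintro rfl
      have hpos : 0 < Real.sqrt 2 := Real.sqrt_pos.mpr (by norm_num)
      refine ⟨hpos, (key_lemma _ _ hpos).mpr ?_⟩
      rw [Real.sq_sqrt (by norm_num : (0:ℝ) ≤ 2)]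
      norm_num
  · -- no solutions
    rintro h ⟨A, hA, heq⟩
    have hk : (A ^ 2 - 2) ^ 2 = q := (key_lemma ζ₄ A hA).mp heq
    have : q < 0 := by rw [hq_def]; linarith
    nlinarith [sq_nonneg (A ^ 2 - 2)]
end

section
/- Let τ > 0 and δ = 5/16. Then the system f₁(A,ζ₄) = f₂(A,ζ₄) = 0 has exactly one solution with A > 0, namely (A, ζ₄) = (1, 31/16); i.e., the two nontrivial equilibria coalesce in a saddle-node bifurcation at δ = 5/16, ζ₄ = 31/16, A = 1. -/
/-- Right-hand side of the slow-flow amplitude equation for the 4-node network. -/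
noncomputable def f₁ (A ζ₄ : ℝ) : ℝ :=
  (1 / 4) * ((1 - ζ₄) * A + 5 / 4 * A ^ 3 - 5 / 16 * A ^ 5)

/-- Right-hand side of the autonomous damping dynamics for the 4-node network. -/
noncomputable def f₂ (δ τ A ζ₄ : ℝ) : ℝ :=
  τ⁻¹ * (-ζ₄ + δ + 1 + 5 / 8 * A ^ 2)

/-- At `δ = 5/16` the coupled dynamics has exactly one nontrivial equilibrium,
namely `(A, ζ₄) = (1, 31/16)`: the saddle-node bifurcation of equilibria. -/
theorem stmt_4 (τ : ℝ) (hτ : 0 < τ) :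
    ∀ A ζ₄ : ℝ,
      (0 < A ∧ f₁ A ζ₄ = 0 ∧ f₂ (5 / 16) τ A ζ₄ = 0) ↔ (A = 1 ∧ ζ₄ = 31 / 16) := by
  intro A ζ₄
  constructor
  · rintro ⟨hA, h1, h2⟩
    simp only [f₁, f₂] at h1 h2
    have hτ' : τ⁻¹ ≠ 0 := inv_ne_zero hτ.ne'
    have h2' : -ζ₄ + 5 / 16 + 1 + 5 / 8 * A ^ 2 = 0 := by
      rcases mul_eq_zero.mp h2 with h | h
      · exact absurd h hτ'
      · exact h
    have hz : ζ₄ = 21 / 16 + 5 / 8 * A ^ 2 := by linarith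
    subst hz
    have h1' : -(5/64) * A * (A ^ 2 - 1) ^ 2 = 0 := by ring_nf; ring_nf at h1; linarith
    have hA2 : (A ^ 2 - 1) ^ 2 = 0 := by
      rcases mul_eq_zero.mp h1' with h | h
      · rcases mul_eq_zero.mp h with h | h
        · norm_num at h
        · exact absurd h hA.ne'
      · exact h
    have : A ^ 2 = 1 := by nlinarith [sq_nonneg (A^2-1)]
    have hA1 : A = 1 := by nlinarith
    exact ⟨hA1, by rw [hA1]; norm_num⟩
  · rintro ⟨hA, hz⟩
    subst hA; subst hz
    refine ⟨one_pos, ?_, ?_⟩ <;> simp [f₁, f₂] <;> norm_num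
end

section
/- Let δ > 0, τ > 0, and let (A, ζ₄) with A > 0 be a nontrivial equilibrium, i.e., f₁(A,ζ₄) = f₂(A,ζ₄) = 0. Then the Jacobian matrix J of (f₁, f₂) at (A, ζ₄) satisfies trace J = δ − 1/τ and det J = (5A²/(16τ))(A² − 1). -/
open Matrix

/-- Jacobian matrix of the planar vector field `(f₁, f₂)` with respect to `(A, ζ₄)`. -/
noncomputable def J (δ τ A ζ₄ : ℝ) : Matrix (Fin 2) (Fin 2) ℝ :=
  !![deriv (fun a => f₁ a ζ₄) A, deriv (fun z => f₁ A z) ζ₄;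
     deriv (fun a => f₂ δ τ a ζ₄) A, deriv (fun z => f₂ δ τ A z) ζ₄]

/-!
On the curve `f₁ = 0` with `A ≠ 0` the damping is `1 - ζ₄ = (5/16)A⁴ - (5/4)A²`, which turns the
entry `∂f₁/∂A` into `(5/8)A² - (5/16)A⁴`; the equation `f₂ = 0` identifies this with `δ`. The other
entries `-A/4`, `5A/(4τ)`, `-1/τ` do not depend on the equilibrium, and the determinant follows.
-/

theorem hasDerivAt_f₁_fst (A ζ₄ : ℝ) :
    HasDerivAt (fun a => f₁ a ζ₄) ((1 - ζ₄ + 15 / 4 * A ^ 2 - 25 / 16 * A ^ 4) / 4) A := by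
  refine (((((hasDerivAt_id A).const_mul (1 - ζ₄)).add
    ((hasDerivAt_pow 3 A).const_mul (5 / 4))).sub
      ((hasDerivAt_pow 5 A).const_mul (5 / 16))).const_mul (1 / 4 : ℝ)).congr_deriv ?_
  norm_num
  ring

theorem J_eq (δ τ A ζ₄ : ℝ) :
    J δ τ A ζ₄ = !![(1 - ζ₄ + 15 / 4 * A ^ 2 - 25 / 16 * A ^ 4) / 4, -A / 4;
                    5 * A / (4 * τ), -τ⁻¹] := by
  have h₁₂ : deriv (fun z => f₁ A z) ζ₄ = -A / 4 := by
    simp only [f₁, deriv_const_mul_field', deriv_sub_const_fun, deriv_add_const',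
      deriv_mul_const_field', deriv_const_sub_id']
    ring
  have h₂₁ : deriv (fun a => f₂ δ τ a ζ₄) A = 5 * A / (4 * τ) := by
    refine ((((hasDerivAt_pow 2 A).const_mul (5 / 8)).const_add (-ζ₄ + δ + 1)).const_mul
      τ⁻¹).deriv.trans ?_
    norm_num
    ring
  have h₂₂ : deriv (fun z => f₂ δ τ A z) ζ₄ = -τ⁻¹ := by simp [f₂]
  rw [_root_.J, (hasDerivAt_f₁_fst A ζ₄).deriv, h₁₂, h₂₁, h₂₂]

theorem one_sub_eq_of_f₁_eq_zero {A ζ₄ : ℝ} (hA : A ≠ 0) (h : f₁ A ζ₄ = 0) :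
    1 - ζ₄ = 5 / 16 * A ^ 4 - 5 / 4 * A ^ 2 := by
  have : A * ((1 - ζ₄) + 5 / 4 * A ^ 2 - 5 / 16 * A ^ 4) = 0 := by
    rw [f₁] at h
    linear_combination 4 * h
  linear_combination (mul_eq_zero.mp this).resolve_left hA

theorem eq_of_f₂_eq_zero {δ τ A ζ₄ : ℝ} (hτ : τ ≠ 0) (h : f₂ δ τ A ζ₄ = 0) :
    ζ₄ = δ + 1 + 5 / 8 * A ^ 2 := by
  rw [f₂, mul_eq_zero, or_iff_right (inv_ne_zero hτ)] at h
  linear_combination -h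

theorem trace_J_of_f₁_eq_zero_of_f₂_eq_zero {δ τ A ζ₄ : ℝ} (hτ : τ ≠ 0) (hA : A ≠ 0)
    (h₁ : f₁ A ζ₄ = 0) (h₂ : f₂ δ τ A ζ₄ = 0) :
    (J δ τ A ζ₄).trace = δ - 1 / τ := by
  rw [J_eq, trace_fin_two_of, one_div]
  linear_combination 5 / 4 * one_sub_eq_of_f₁_eq_zero hA h₁ + eq_of_f₂_eq_zero hτ h₂

theorem det_J_of_f₁_eq_zero {δ A ζ₄ : ℝ} (τ : ℝ) (hA : A ≠ 0) (h₁ : f₁ A ζ₄ = 0) :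
    (J δ τ A ζ₄).det = (5 * A ^ 2 / (16 * τ)) * (A ^ 2 - 1) := by
  rw [J_eq, det_fin_two_of, one_sub_eq_of_f₁_eq_zero hA h₁]
  ring

theorem stmt_5_general (δ τ A ζ₄ : ℝ) (hτ : 0 < τ) (hA : 0 < A)
    (h1 : f₁ A ζ₄ = 0) (h2 : f₂ δ τ A ζ₄ = 0) :
    (J δ τ A ζ₄).trace = δ - 1 / τ ∧
    (J δ τ A ζ₄).det = (5 * A ^ 2 / (16 * τ)) * (A ^ 2 - 1) :=
  ⟨trace_J_of_f₁_eq_zero_of_f₂_eq_zero hτ.ne' hA.ne' h1 h2, det_J_of_f₁_eq_zero τ hA.ne' h1⟩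

/-- At any nontrivial equilibrium, the Jacobian satisfies
`trace J = δ − 1/τ` and `det J = (5A²/(16τ))(A² − 1)`. -/
theorem stmt_5 (δ τ A ζ₄ : ℝ) (hδ : 0 < δ) (hτ : 0 < τ) (hA : 0 < A)
    (h1 : f₁ A ζ₄ = 0) (h2 : f₂ δ τ A ζ₄ = 0) :
    (J δ τ A ζ₄).trace = δ - 1 / τ ∧
    (J δ τ A ζ₄).det = (5 * A ^ 2 / (16 * τ)) * (A ^ 2 - 1) :=
  stmt_5_general δ τ A ζ₄ hτ hA h1 h2
end
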